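/- arXiv:1504.04671 — 7 statements merged into one kernel-verified Lean document; each statement's English description precedes it below -/
import Mathlib

section
/- Let g : ℝ → ℝ be continuously differentiable with g'(u) > 0 for all u, lim_{u→−∞} g(u) = L₋ and lim_{u→+∞} g(u) = L₊, and let f : ℝ → ℝ be continuously differentiable with L₋ < f(0) < L₊. Then there exist δ > 0 and a₀ > 0 such that for every a with 0 < a < a₀ and every x with |x| < δ and f(x) = g(x/a), one has f'(x) − (1/a)·g'(x/a) < 0; that is, the Jacobian matrix [[−f'(x), 1], [(1/a)·g'(x/a), −1]] of the system ẋ = y − f(x), ẏ = g(x/a) − y at the equilibrium (x, f(x)) has negative determinant, so the equilibrium is a saddle. -/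
/-- Let `g` be C¹ with everywhere positive derivative and limits `Lm`, `Lp` at `∓∞`,
and `f` C¹ with `Lm < f 0 < Lp`.  Then there are `δ > 0` and `a₀ > 0` such that for
every `0 < a < a₀` and every equilibrium `x` with `|x| < δ` and `f x = g (x/a)`,
one has `f'(x) − (1/a)·g'(x/a) < 0`; that is, the Jacobian matrix
`[[−f'(x), 1], [(1/a)·g'(x/a), −1]]` of `ẋ = y − f(x)`, `ẏ = g(x/a) − y` at the
equilibrium `(x, f x)` has negative determinant, so the equilibrium is a saddle. -/
theorem equilibrium_is_saddle_no_sliding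
    (g f : ℝ → ℝ) (Lm Lp : ℝ)
    (hg_smooth : ContDiff ℝ 1 g) (hg' : ∀ u, 0 < deriv g u)
    (hg_bot : Filter.Tendsto g Filter.atBot (nhds Lm))
    (hg_top : Filter.Tendsto g Filter.atTop (nhds Lp))
    (hf_smooth : ContDiff ℝ 1 f)
    (h_lo : Lm < f 0) (h_hi : f 0 < Lp) :
    ∃ δ > 0, ∃ a₀ > 0, ∀ a, 0 < a → a < a₀ →
      ∀ x, |x| < δ → f x = g (x / a) →
        deriv f x - (1 / a) * deriv g (x / a) < 0 ∧
        Matrix.det !![-(deriv f x), 1; (1 / a) * deriv g (x / a), -1] < 0 := by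
  set c₁ := (Lm + f 0) / 2 with hc₁def
  set c₂ := (f 0 + Lp) / 2 with hc₂def
  have hc₁ : Lm < c₁ := by simp only [hc₁def]; linarith
  have hc₂ : c₂ < Lp := by simp only [hc₂def]; linarith
  have hmem : f 0 ∈ Set.Ioo c₁ c₂ := ⟨by simp only [hc₁def]; linarith,
    by simp only [hc₂def]; linarith⟩
  -- neighborhood where f stays in (c₁, c₂)
  have hnb : ∀ᶠ x in nhds (0 : ℝ), f x ∈ Set.Ioo c₁ c₂ :=
    hf_smooth.continuous.continuousAt.preimage_mem_nhds (isOpen_Ioo.mem_nhds hmem)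
  obtain ⟨δ, hδpos, hδ⟩ := Metric.eventually_nhds_iff.1 hnb
  -- bounds from the limits of g
  obtain ⟨A, hA⟩ := Filter.eventually_atBot.1 (hg_bot.eventually_lt_const hc₁)
  obtain ⟨B, hB⟩ := Filter.eventually_atTop.1 (hg_top.eventually_const_lt hc₂)
  set A' := min A B with hA'def
  set B' := max A B with hB'def
  have hAB : A' ≤ B' := min_le_max
  -- minimum of deriv g on [A', B']
  have hdg_cont : Continuous (deriv g) := hg_smooth.continuous_deriv le_rfl
  obtain ⟨u₀, hu₀, hmin⟩ := isCompact_Icc.exists_isMinOn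
    (Set.nonempty_Icc.2 hAB) hdg_cont.continuousOn
  set m := deriv g u₀ with hmdef
  have hm : 0 < m := hg' u₀
  -- maximum of deriv f on [-δ, δ]
  have hdf_cont : Continuous (deriv f) := hf_smooth.continuous_deriv le_rfl
  obtain ⟨x₀, hx₀, hmax⟩ := isCompact_Icc.exists_isMaxOn
    (Set.nonempty_Icc.2 (by linarith : -δ ≤ δ)) hdf_cont.continuousOn
  set M := deriv f x₀ with hMdef
  refine ⟨δ, hδpos, m / (|M| + 1), by positivity, ?_⟩
  intro a ha ha₀ x hx heq
  have hfx : f x ∈ Set.Ioo c₁ c₂ := hδ (by simpa [Real.dist_eq] using hx)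
  have hgx : g (x / a) ∈ Set.Ioo c₁ c₂ := heq ▸ hfx
  -- x/a lies in [A', B']
  have hxa : x / a ∈ Set.Icc A' B' := by
    constructor
    · by_contra h
      push_neg at h
      have : g (x / a) < c₁ := hA _ (le_trans h.le (min_le_left A B))
      exact absurd hgx.1 (not_lt.2 this.le)
    · by_contra h
      push_neg at h
      have : c₂ < g (x / a) := hB _ (le_trans (le_max_right A B) h.le)
      exact absurd hgx.2 (not_lt.2 this.le)
  have hmle : m ≤ deriv g (x / a) := hmin hxa
  have hfle : deriv f x ≤ M := hmax (Set.mem_Icc.2 (abs_le.1 hx.le))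
  have hMabs : M ≤ |M| := le_abs_self M
  have haM : a * M < m := by
    have h1 : a * (|M| + 1) < m := by
      have := (lt_div_iff₀ (by positivity : (0:ℝ) < |M| + 1)).1 ha₀
      nlinarith [abs_nonneg M]
    nlinarith [abs_nonneg M]
  have hkey : deriv f x - (1 / a) * deriv g (x / a) < 0 := by
    have h2 : M < m / a := (lt_div_iff₀ ha).2 (by linarith [haM])
    have h3 : m / a ≤ deriv g (x / a) / a := by
      exact div_le_div_of_nonneg_right hmle ha.le
    have h4 : (1 / a) * deriv g (x / a) = deriv g (x / a) / a := by ring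
    linarith
  refine ⟨hkey, ?_⟩
  have hdet : Matrix.det !![-(deriv f x), 1; (1 / a) * deriv g (x / a), -1]
      = deriv f x - (1 / a) * deriv g (x / a) := by
    simp [Matrix.det_fin_two_of]
  rw [hdet]; exact hkey
end

section
/- Let f : ℝ → ℝ be continuously differentiable with f'(0) > 0, and let c be a real constant with c < f(0). Then there exist T > 0 and a differentiable solution (x, y) : [0, T] → ℝ² of the system x'(t) = y(t) − f(x(t)), y'(t) = c − y(t) such that x(T) = 0, y(T) = f(0), and x(t) < 0, y(t) > f(0) for all t ∈ [0, T). That is, there is a trajectory of the left-hand vector field that reaches the double tangency point (0, f(0)) in finite forward time from the region { x < 0, y > f(0) }. -/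
/-!
Solve the system locally through the tangency point `(0, f 0)` at time `0`
(Picard–Lindelöf) and look backwards in time. At the tangency `ẋ = 0` and
`ẍ = ẏ - f' x · ẋ = c - f 0 < 0`, so `ẋ > 0` just before time `0`, while also
`ẏ = c - f 0 < 0` there. Hence the solution lies in `{x < 0, y > f 0}` on some interval
`[l, 0)`, and shifting time by `-l` gives the trajectory.
-/

open Set Filter Topology

theorem HasDerivAt.eventually_nhdsLT_lt_of_neg {g : ℝ → ℝ} {d a : ℝ} (hg : HasDerivAt g d a)
    (hd : d < 0) : ∀ᶠ t in 𝓝[<] a, g a < g t := by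
  have hslope : ∀ᶠ t in 𝓝[<] a, 0 < slope (-g) a t :=
    ((hasDerivAt_iff_tendsto_slope.mp hg.neg).mono_left (nhdsLT_le_nhdsNE a)).eventually
      (eventually_gt_nhds (neg_pos.2 hd))
  filter_upwards [hslope, self_mem_nhdsWithin] with t ht hta
  exact neg_lt_neg_iff.1 ((slope_pos_iff_gt (f := -g) hta).1 ht)

theorem eventually_nhdsLT_lt_of_hasDerivAt_pos {g g' : ℝ → ℝ} {a : ℝ}
    (hd : ∀ᶠ t in 𝓝 a, HasDerivAt g (g' t) t) (hpos : ∀ᶠ t in 𝓝[<] a, 0 < g' t) :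
    ∀ᶠ t in 𝓝[<] a, g t < g a := by
  obtain ⟨l, hla : l < a, hl⟩ :=
    mem_nhdsLT_iff_exists_Ioo_subset.1 ((hd.filter_mono nhdsWithin_le_nhds).and hpos)
  filter_upwards [Ioo_mem_nhdsLT hla] with t ht
  have hcont : ContinuousOn g (Icc t a) := fun s hs => by
    rcases hs.2.eq_or_lt with rfl | hsa
    · exact hd.self_of_nhds.continuousAt.continuousWithinAt
    · exact (hl ⟨ht.1.trans_le hs.1, hsa⟩).1.continuousAt.continuousWithinAt
  obtain ⟨ξ, hξ, hmvt⟩ := exists_hasDerivAt_eq_slope g g' ht.2 hcont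
    fun s hs => (hl ⟨ht.1.trans hs.1, hs.2⟩).1
  have := (hl ⟨ht.1.trans hξ.1, hξ.2⟩).2
  rw [hmvt, div_pos_iff_of_pos_right (sub_pos.2 ht.2), sub_pos] at this
  exact this

theorem eventually_nhdsLT_lt_and_gt_of_solution_through_tangency
    {f x y : ℝ → ℝ} {c a x₀ : ℝ}
    (hf : DifferentiableAt ℝ f x₀) (hc : c < f x₀) (hxa : x a = x₀) (hya : y a = f x₀)
    (hx : ∀ᶠ t in 𝓝 a, HasDerivAt x (y t - f (x t)) t)
    (hy : ∀ᶠ t in 𝓝 a, HasDerivAt y (c - y t) t) :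
    ∀ᶠ t in 𝓝[<] a, x t < x₀ ∧ f x₀ < y t := by
  have hxa' : HasDerivAt x 0 a := by simpa [hxa, hya] using hx.self_of_nhds
  have hx'' : HasDerivAt (fun t => y t - f (x t)) (c - f x₀) a := by
    have := hy.self_of_nhds.sub ((hxa ▸ hf.hasDerivAt).comp a hxa')
    rwa [hya, mul_zero, sub_zero] at this
  have hx'pos : ∀ᶠ t in 𝓝[<] a, 0 < y t - f (x t) := by
    simpa [hxa, hya] using hx''.eventually_nhdsLT_lt_of_neg (sub_neg.2 hc)
  filter_upwards [eventually_nhdsLT_lt_of_hasDerivAt_pos hx hx'pos,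
    hy.self_of_nhds.eventually_nhdsLT_lt_of_neg (by rwa [hya, sub_neg])] with t hxt hyt
  exact ⟨hxa ▸ hxt, hya ▸ hyt⟩

theorem exists_local_solution_of_contDiff {f : ℝ → ℝ} (hf : ContDiff ℝ 1 f)
    (c x₀ y₀ a : ℝ) :
    ∃ x y : ℝ → ℝ, x a = x₀ ∧ y a = y₀ ∧
      ∀ᶠ t in 𝓝 a, HasDerivAt x (y t - f (x t)) t ∧ HasDerivAt y (c - y t) t := by
  have hv : ContDiff ℝ 1 fun p : ℝ × ℝ => (p.2 - f p.1, c - p.2) :=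
    (contDiff_snd.sub (hf.comp contDiff_fst)).prodMk (contDiff_const.sub contDiff_snd)
  obtain ⟨φ, hφa, ε, hε, hφ⟩ :=
    hv.contDiffAt.exists_forall_mem_closedBall_exists_eq_forall_mem_Ioo_hasDerivAt₀
      (x₀ := (x₀, y₀)) a
  refine ⟨fun t => (φ t).1, fun t => (φ t).2, by simp [hφa], by simp [hφa], ?_⟩
  filter_upwards [Ioo_mem_nhds (sub_lt_self a hε) (lt_add_of_pos_right a hε)] with t ht
  exact ⟨(hφ t ht).fst, (hφ t ht).snd⟩

theorem trajectory_reaching_double_tangency_general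
    (f : ℝ → ℝ) (hf : ContDiff ℝ 1 f)
    (c : ℝ) (hc : c < f 0) :
    ∃ T > 0, ∃ x y : ℝ → ℝ,
      (∀ t ∈ Set.Icc 0 T, HasDerivWithinAt x (y t - f (x t)) (Set.Icc 0 T) t) ∧
      (∀ t ∈ Set.Icc 0 T, HasDerivWithinAt y (c - y t) (Set.Icc 0 T) t) ∧
      x T = 0 ∧ y T = f 0 ∧
      (∀ t ∈ Set.Ico 0 T, x t < 0 ∧ f 0 < y t) := by
  obtain ⟨x, y, hx0, hy0, hsol⟩ := exists_local_solution_of_contDiff hf c 0 (f 0) 0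
  have hsign := eventually_nhdsLT_lt_and_gt_of_solution_through_tangency
    (hf.differentiable one_ne_zero 0) hc hx0 hy0
    (hsol.mono fun _ h => h.1) (hsol.mono fun _ h => h.2)
  obtain ⟨l, hl, hIcc⟩ := mem_nhdsLE_iff_exists_Icc_subset.1
    ((hsol.and (eventually_nhdsWithin_iff.1 hsign)).filter_mono nhdsWithin_le_nhds)
  have hshift : ∀ t ∈ Icc 0 (-l), t + l ∈ Icc l 0 := fun t ht =>
    ⟨by linarith [ht.1], by linarith [ht.2]⟩
  refine ⟨-l, neg_pos.2 hl, fun t => x (t + l), fun t => y (t + l),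
    fun t ht => ((hIcc (hshift t ht)).1.1.comp_add_const t l).hasDerivWithinAt,
    fun t ht => ((hIcc (hshift t ht)).1.2.comp_add_const t l).hasDerivWithinAt,
    by simpa using hx0, by simpa using hy0, fun t ht => ?_⟩
  exact (hIcc (hshift t (Ico_subset_Icc_self ht))).2
    (mem_Iio.2 (by linarith [ht.2]))

/-- Let `f` be C¹ with `f' 0 > 0` and let `c < f 0`.  Then there are `T > 0` and a
differentiable solution `(x, y) : [0, T] → ℝ²` of `x' = y − f(x)`, `y' = c − y`
with `x T = 0`, `y T = f 0`, and `x t < 0`, `y t > f 0` for all `t ∈ [0, T)`: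
a trajectory of the left-hand vector field reaches the double tangency `(0, f 0)`
in finite forward time from the region `{x < 0, y > f 0}`. -/
theorem trajectory_reaching_double_tangency
    (f : ℝ → ℝ) (hf : ContDiff ℝ 1 f) (hf' : 0 < deriv f 0)
    (c : ℝ) (hc : c < f 0) :
    ∃ T > 0, ∃ x y : ℝ → ℝ,
      (∀ t ∈ Set.Icc 0 T, HasDerivWithinAt x (y t - f (x t)) (Set.Icc 0 T) t) ∧
      (∀ t ∈ Set.Icc 0 T, HasDerivWithinAt y (c - y t) (Set.Icc 0 T) t) ∧
      x T = 0 ∧ y T = f 0 ∧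
      (∀ t ∈ Set.Ico 0 T, x t < 0 ∧ f 0 < y t) :=
  trajectory_reaching_double_tangency_general f hf c hc
end

section
/- Let g : ℝ → ℝ be continuously differentiable with g'(u) > 0 for all u, lim_{u→−∞} g(u) = L₋ and lim_{u→+∞} g(u) = L₊, and let f : ℝ → ℝ be continuously differentiable with L₋ < f(0) < L₊. Then there exist δ > 0 and a₀ > 0 such that for every a with 0 < a < a₀ and every x with |x| < δ and f(x) = g(x/a), the Jacobian matrix [[(1/a)·g'(x/a), −1], [f'(x), −1]] of the system ẋ = g(x/a) − y, ẏ = f(x) − y at the equilibrium (x, f(x)) has negative determinant f'(x) − (1/a)·g'(x/a) < 0, so the equilibrium is a saddle. -/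
/-!
Fix `Lm < lo < f 0 < hi < Lp`. Near `x = 0` we have `f x ∈ (lo, hi)`, so at an equilibrium
`g (x / a) = f x` lies in `[lo, hi]`; since `g` tends to `Lm` and `Lp` at `∓∞`, this confines
`x / a` to a compact interval, on which the continuous positive `g'` is at least some `c > 0`.
Hence `(1/a)·g'(x/a) ≥ c / a`, which beats the bound `M` of `f'` near `0` once `a < c / M`.
-/

open Set Filter Topology

theorem Matrix.det_fin_two_of_neg_one {R : Type*} [CommRing R] (p q : R) :
    !![p, -1; q, -1].det = q - p := by
  rw [Matrix.det_fin_two_of]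
  ring

theorem exists_preimage_Icc_subset_Icc_of_tendsto {α β : Type*} [LinearOrder α] [Nonempty α]
    [TopologicalSpace β] [LinearOrder β] [OrderClosedTopology β] {g : α → β} {Lm Lp lo hi : β}
    (hbot : Tendsto g atBot (𝓝 Lm)) (htop : Tendsto g atTop (𝓝 Lp))
    (hlo : Lm < lo) (hhi : hi < Lp) :
    ∃ u₁ u₂, g ⁻¹' Icc lo hi ⊆ Icc u₁ u₂ := by
  obtain ⟨u₁, hu₁⟩ := eventually_atBot.mp (hbot.eventually (isOpen_Iio.mem_nhds hlo))
  obtain ⟨u₂, hu₂⟩ := eventually_atTop.mp (htop.eventually (isOpen_Ioi.mem_nhds hhi))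
  refine ⟨u₁, u₂, fun u ⟨hlo_u, hhi_u⟩ => ⟨?_, ?_⟩⟩
  · by_contra! h
    exact (hu₁ u h.le).not_ge hlo_u
  · by_contra! h
    exact (hu₂ u h.le).not_ge hhi_u

theorem exists_pos_forall_le_of_map_mem_Icc {g h : ℝ → ℝ} {Lm Lp lo hi : ℝ}
    (hh : Continuous h) (hpos : ∀ u, 0 < h u)
    (hbot : Tendsto g atBot (𝓝 Lm)) (htop : Tendsto g atTop (𝓝 Lp))
    (hlo : Lm < lo) (hhi : hi < Lp) :
    ∃ c > 0, ∀ u, g u ∈ Icc lo hi → c ≤ h u := by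
  obtain ⟨u₁, u₂, hsub⟩ := exists_preimage_Icc_subset_Icc_of_tendsto hbot htop hlo hhi
  obtain ⟨c, hc, hle⟩ :=
    isCompact_Icc.exists_forall_le' hh.continuousOn fun u (_ : u ∈ Icc u₁ u₂) => hpos u
  exact ⟨c, hc, fun u hu => hle u (hsub hu)⟩

/-- Let `g` be C¹ with everywhere positive derivative and limits `Lm`, `Lp` at `∓∞`,
and `f` C¹ with `Lm < f 0 < Lp`.  Then there are `δ > 0` and `a₀ > 0` such that for
every `0 < a < a₀` and every `x` with `|x| < δ` and `f x = g (x/a)`, the Jacobian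
matrix `[[(1/a)·g'(x/a), −1], [f'(x), −1]]` of the system `ẋ = g(x/a) − y`,
`ẏ = f(x) − y` at the equilibrium `(x, f x)` has negative determinant
`f'(x) − (1/a)·g'(x/a) < 0`, so the equilibrium is a saddle. -/
theorem equilibrium_is_saddle_repelling_sliding
    (g f : ℝ → ℝ) (Lm Lp : ℝ)
    (hg_smooth : ContDiff ℝ 1 g) (hg' : ∀ u, 0 < deriv g u)
    (hg_bot : Filter.Tendsto g Filter.atBot (nhds Lm))
    (hg_top : Filter.Tendsto g Filter.atTop (nhds Lp))
    (hf_smooth : ContDiff ℝ 1 f)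
    (h_lo : Lm < f 0) (h_hi : f 0 < Lp) :
    ∃ δ > 0, ∃ a₀ > 0, ∀ a, 0 < a → a < a₀ →
      ∀ x, |x| < δ → f x = g (x / a) →
        Matrix.det !![(1 / a) * deriv g (x / a), -1; deriv f x, -1]
            = deriv f x - (1 / a) * deriv g (x / a) ∧
        Matrix.det !![(1 / a) * deriv g (x / a), -1; deriv f x, -1] < 0 := by
  obtain ⟨lo, hLm_lo, hlo⟩ := exists_between h_lo
  obtain ⟨hi, hhi, hhi_Lp⟩ := exists_between h_hi
  obtain ⟨c, hc, hc_le⟩ := exists_pos_forall_le_of_map_mem_Icc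
    (hg_smooth.continuous_deriv le_rfl) hg' hg_bot hg_top hLm_lo hhi_Lp
  obtain ⟨δ, hδ, hf_mem⟩ := Metric.eventually_nhds_iff.mp
    (hf_smooth.continuous.continuousAt.eventually (Ioo_mem_nhds hlo hhi))
  obtain ⟨M, hM, hM_le⟩ := ((isCompact_closedBall (0 : ℝ) δ).image_of_continuousOn
    (hf_smooth.continuous_deriv le_rfl).continuousOn).isBounded.exists_pos_norm_le
  refine ⟨δ, hδ, c / M, div_pos hc hM, fun a ha ha_lt x hx hfx => ?_⟩
  rw [Matrix.det_fin_two_of_neg_one]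
  refine ⟨rfl, sub_neg.mpr ?_⟩
  have hx_dist : dist x 0 < δ := by rwa [Real.dist_0_eq_abs]
  have hg'_ge : c ≤ deriv g (x / a) := hc_le _ (hfx ▸ Ioo_subset_Icc_self (hf_mem hx_dist))
  have hf'_le : deriv f x ≤ M :=
    (le_abs_self _).trans (hM_le _ ⟨x, Metric.mem_closedBall.mpr hx_dist.le, rfl⟩)
  calc deriv f x ≤ M := hf'_le
    _ < c / a := by rw [lt_div_iff₀ ha, mul_comm]; exact (lt_div_iff₀ hM).mp ha_lt
    _ ≤ 1 / a * deriv g (x / a) := by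
      rw [one_div_mul_eq_div]; exact div_le_div_of_nonneg_right hg'_ge ha.le
end

section
/- Let g : ℝ → ℝ be continuously differentiable with g'(u) > 0 for all u, lim_{u→−∞} g(u) = L₋ and lim_{u→+∞} g(u) = L₊, and let f : ℝ → ℝ be continuously differentiable with L₋ < f(0) < L₊. Then there exist δ > 0 and a₀ > 0 such that for every a with 0 < a < a₀ and every x with |x| < δ and f(x) = g(x/a), the Jacobian matrix [[−(1/a)·g'(x/a), 1], [−f'(x), 1]] of the system ẋ = y − g(x/a), ẏ = y − f(x) at the equilibrium (x, f(x)) has negative determinant f'(x) − (1/a)·g'(x/a) < 0, so the equilibrium is a saddle. -/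
/-!
Near `x = 0` the graph of `f` stays in a window `(c₁, c₂)` with `Lm < c₁ < c₂ < Lp`, and `f'` is
bounded above by some `B`. Since `g` is monotone with limits `Lm`, `Lp`, an equilibrium condition
`f x = g (x / a)` forces `x / a` into a fixed compact interval, on which `g'` has a positive
lower bound `m`. Hence `g'(x/a)/a ≥ m/a > B > f'(x)` as soon as `a < m / B`.
-/

open Filter Set Topology

theorem Matrix.det_fin_two_neg_one {R : Type*} [CommRing R] (p q : R) :
    !![-p, 1; -q, 1].det = q - p := by
  rw [Matrix.det_fin_two_of]
  ring

theorem Monotone.exists_preimage_Ioo_subset_Icc {α β : Type*} [LinearOrder α] [Nonempty α]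
    [LinearOrder β] [TopologicalSpace β] [OrderTopology β] {g : α → β} (hg : Monotone g)
    {Lm Lp c₁ c₂ : β} (hbot : Tendsto g atBot (𝓝 Lm)) (htop : Tendsto g atTop (𝓝 Lp))
    (h₁ : Lm < c₁) (h₂ : c₂ < Lp) : ∃ u₁ u₂, g ⁻¹' Ioo c₁ c₂ ⊆ Icc u₁ u₂ := by
  obtain ⟨u₁, hu₁⟩ := (hbot.eventually (eventually_lt_nhds h₁)).exists
  obtain ⟨u₂, hu₂⟩ := (htop.eventually (eventually_gt_nhds h₂)).exists
  exact ⟨u₁, u₂, fun u hu ↦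
    ⟨(hg.reflect_lt (hu₁.trans hu.1)).le, (hg.reflect_lt (hu.2.trans hu₂)).le⟩⟩

theorem exists_pos_le_deriv_of_mem_Ioo {g : ℝ → ℝ} {Lm Lp c₁ c₂ : ℝ}
    (hg_smooth : ContDiff ℝ 1 g) (hg' : ∀ u, 0 < deriv g u)
    (hbot : Tendsto g atBot (𝓝 Lm)) (htop : Tendsto g atTop (𝓝 Lp))
    (h₁ : Lm < c₁) (h₂ : c₂ < Lp) :
    ∃ m > 0, ∀ u, g u ∈ Ioo c₁ c₂ → m ≤ deriv g u := by
  obtain ⟨u₁, u₂, hsub⟩ :=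
    (strictMono_of_deriv_pos hg').monotone.exists_preimage_Ioo_subset_Icc hbot htop h₁ h₂
  obtain ⟨m, hm, hm_le⟩ := isCompact_Icc.exists_forall_le'
    (hg_smooth.continuous_deriv le_rfl).continuousOn fun u _ ↦ hg' u
  exact ⟨m, hm, fun u hu ↦ hm_le u (hsub hu)⟩

/-- Let `g` be C¹ with everywhere positive derivative and limits `Lm`, `Lp` at `∓∞`,
and `f` C¹ with `Lm < f 0 < Lp`.  Then there are `δ > 0` and `a₀ > 0` such that for
every `0 < a < a₀` and every `x` with `|x| < δ` and `f x = g (x/a)`, the Jacobian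
matrix `[[−(1/a)·g'(x/a), 1], [−f'(x), 1]]` of the system `ẋ = y − g(x/a)`,
`ẏ = y − f(x)` at the equilibrium `(x, f x)` has negative determinant
`f'(x) − (1/a)·g'(x/a) < 0`, so the equilibrium is a saddle. -/
theorem equilibrium_is_saddle_attracting_sliding
    (g f : ℝ → ℝ) (Lm Lp : ℝ)
    (hg_smooth : ContDiff ℝ 1 g) (hg' : ∀ u, 0 < deriv g u)
    (hg_bot : Filter.Tendsto g Filter.atBot (nhds Lm))
    (hg_top : Filter.Tendsto g Filter.atTop (nhds Lp))
    (hf_smooth : ContDiff ℝ 1 f)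
    (h_lo : Lm < f 0) (h_hi : f 0 < Lp) :
    ∃ δ > 0, ∃ a₀ > 0, ∀ a, 0 < a → a < a₀ →
      ∀ x, |x| < δ → f x = g (x / a) →
        Matrix.det !![-((1 / a) * deriv g (x / a)), 1; -(deriv f x), 1]
            = deriv f x - (1 / a) * deriv g (x / a) ∧
        Matrix.det !![-((1 / a) * deriv g (x / a)), 1; -(deriv f x), 1] < 0 := by
  obtain ⟨c₁, hLc₁, hc₁f⟩ := exists_between h_lo
  obtain ⟨c₂, hfc₂, hc₂L⟩ := exists_between h_hi
  obtain ⟨m, hm, hm_le⟩ := exists_pos_le_deriv_of_mem_Ioo hg_smooth hg' hg_bot hg_top hLc₁ hc₂L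
  set B := |deriv f 0| + 1
  have hB : 0 < B := by positivity
  have hf_near : ∀ᶠ x in 𝓝 0, f x ∈ Ioo c₁ c₂ ∧ deriv f x < B :=
    (hf_smooth.continuous.continuousAt.eventually (isOpen_Ioo.mem_nhds ⟨hc₁f, hfc₂⟩)).and
      ((hf_smooth.continuous_deriv le_rfl).continuousAt.eventually
        (gt_mem_nhds ((le_abs_self _).trans_lt (lt_add_one _))))
  obtain ⟨δ, hδ, hnear⟩ := Metric.eventually_nhds_iff.1 hf_near
  refine ⟨δ, hδ, m / B, by positivity, fun a ha haB x hx hfx ↦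
    ⟨Matrix.det_fin_two_neg_one _ _, ?_⟩⟩
  obtain ⟨hfx_mem, hf'x⟩ := hnear (by simpa using hx)
  rw [Matrix.det_fin_two_neg_one, sub_neg]
  calc deriv f x < B := hf'x
    _ < m / a := by rwa [lt_div_iff₀ ha, mul_comm, ← lt_div_iff₀ hB]
    _ ≤ 1 / a * deriv g (x / a) := by
      rw [one_div_mul_eq_div]
      gcongr
      exact hm_le _ (hfx ▸ hfx_mem)
end

section
/- Let f : ℝ → ℝ be continuously differentiable and let c be a real constant with c > f(0). Then there exist T > 0 and a differentiable solution (x, y) : [0, T] → ℝ² of the system x'(t) = y(t) − c, y'(t) = y(t) − f(x(t)) such that x(T) = 0, y(T) = f(0), and x(t) > 0 for all t ∈ [0, T). That is, a trajectory of the right-hand vector field reaches the pseudoequilibrium (0, f(0)) in finite forward time from the region x > 0, playing the role of a stable manifold. -/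
/-!
Solve the system backwards in time from the pseudoequilibrium `(0, f 0)` by Picard–Lindelöf.
Since `f 0 < c`, the trajectory stays in `y < c` for a short time, where `ẋ = y - c < 0`;
so `x` decreases strictly to its final value `0` and is positive before.
-/

open Set Topology

theorem ContDiffAt.exists_eq_forall_mem_Icc_hasDerivAt_and_mem {E : Type*} [NormedAddCommGroup E]
    [NormedSpace ℝ E] [CompleteSpace E] {v : E → E} {x₀ : E} (hv : ContDiffAt ℝ 1 v x₀)
    {U : Set E} (hU : U ∈ 𝓝 x₀) :
    ∃ T > 0, ∃ γ : ℝ → E, γ T = x₀ ∧ ∀ t ∈ Icc 0 T, HasDerivAt γ (v (γ t)) t ∧ γ t ∈ U := by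
  obtain ⟨α, hα0, ε, hε, hα⟩ :=
    hv.neg.exists_forall_mem_closedBall_exists_eq_forall_mem_Ioo_hasDerivAt₀ 0
  have hαU : α ⁻¹' U ∈ 𝓝 0 :=
    (hα 0 (by simp [hε])).continuousAt.preimage_mem_nhds (hα0 ▸ hU)
  have hIoo : Ioo (0 - ε) (0 + ε) ∈ 𝓝 (0 : ℝ) := Ioo_mem_nhds (by linarith) (by linarith)
  obtain ⟨δ, hδ, hδU⟩ := Metric.mem_nhds_iff.1 (Filter.inter_mem hIoo hαU)
  refine ⟨δ / 2, by positivity, fun t ↦ α (δ / 2 - t), by simpa using hα0, fun t ht ↦ ?_⟩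
  have hs : δ / 2 - t ∈ Ioo (0 - ε) (0 + ε) ∩ α ⁻¹' U :=
    hδU (by rw [Metric.mem_ball, Real.dist_0_eq_abs, abs_lt]; constructor <;> linarith [ht.1, ht.2])
  exact ⟨by simpa using (hα _ hs.1).comp_const_sub (δ / 2) t, hs.2⟩

/-- Let `f` be C¹ and `c > f 0`.  Then there are `T > 0` and a differentiable
solution `(x, y) : [0, T] → ℝ²` of `x' = y − c`, `y' = y − f(x)` with `x T = 0`,
`y T = f 0`, and `x t > 0` for all `t ∈ [0, T)`: a trajectory of the right-hand
vector field reaches the pseudoequilibrium `(0, f 0)` in finite forward time from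
the region `x > 0`, playing the role of a stable manifold. -/
theorem trajectory_reaching_pseudoequilibrium
    (f : ℝ → ℝ) (hf : ContDiff ℝ 1 f) (c : ℝ) (hc : f 0 < c) :
    ∃ T > 0, ∃ x y : ℝ → ℝ,
      (∀ t ∈ Set.Icc 0 T, HasDerivWithinAt x (y t - c) (Set.Icc 0 T) t) ∧
      (∀ t ∈ Set.Icc 0 T, HasDerivWithinAt y (y t - f (x t)) (Set.Icc 0 T) t) ∧
      x T = 0 ∧ y T = f 0 ∧
      (∀ t ∈ Set.Ico 0 T, 0 < x t) := by
  have hF : ContDiff ℝ 1 fun p : ℝ × ℝ ↦ (p.2 - c, p.2 - f p.1) := by fun_prop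
  obtain ⟨T, hT, γ, hγT, hγ⟩ :=
    hF.contDiffAt.exists_eq_forall_mem_Icc_hasDerivAt_and_mem (x₀ := (0, f 0)) <|
    (isOpen_lt continuous_snd continuous_const).mem_nhds (show (0, f 0).2 < c from hc)
  have hx (t) (ht : t ∈ Icc 0 T) : HasDerivAt (fun t ↦ (γ t).1) ((γ t).2 - c) t :=
    hasFDerivAt_fst.comp_hasDerivAt (l := ContinuousLinearMap.fst ℝ ℝ ℝ) t (hγ t ht).1
  have hy (t) (ht : t ∈ Icc 0 T) : HasDerivAt (fun t ↦ (γ t).2) ((γ t).2 - f (γ t).1) t :=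
    hasFDerivAt_snd.comp_hasDerivAt (l := ContinuousLinearMap.snd ℝ ℝ ℝ) t (hγ t ht).1
  have hanti : StrictAntiOn (fun t ↦ (γ t).1) (Icc 0 T) := by
    refine strictAntiOn_of_hasDerivWithinAt_neg (f' := fun t ↦ (γ t).2 - c) (convex_Icc 0 T)
      (fun t ht ↦ (hx t ht).continuousAt.continuousWithinAt) (fun t ht ↦ ?_) (fun t ht ↦ ?_)
    all_goals rw [interior_Icc] at ht
    · exact (hx t (Ioo_subset_Icc_self ht)).hasDerivWithinAt
    · exact sub_neg.2 (hγ t (Ioo_subset_Icc_self ht)).2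
  refine ⟨T, hT, fun t ↦ (γ t).1, fun t ↦ (γ t).2, fun t ht ↦ (hx t ht).hasDerivWithinAt,
    fun t ht ↦ (hy t ht).hasDerivWithinAt, by simp [hγT], by simp [hγT], fun t ht ↦ ?_⟩
  simpa [hγT] using hanti ⟨ht.1, ht.2.le⟩ ⟨hT.le, le_rfl⟩ ht.2
end

section
/- Let Q, B, m > 0, n ≥ 0, C, T₀ ∈ ℝ, and α_i > α_w. For D > 0 define the albedo α_D(T) = (α_i + α_w)/2 − ((α_i − α_w)/2)·tanh((T − T₀)/D), and set A_i = Q(1 − α_i) − B·T₀ and A_w = Q(1 − α_w) − B·T₀. Assume A_i < (n·T₀ + C)/m < A_w. Then for every δ > 0 there exists D₀ > 0 such that for every D with 0 < D < D₀ there exists T with |T − T₀| < δ satisfying Q(1 − α_D(T)) − (n·T + C)/m − B·T = 0; equivalently, the pair (T, A) with A = (n·T + C)/m is an equilibrium of the energy balance system Ṫ = Q(1 − α_D(T)) − (A + B·T), Ȧ = −m·A + n·T + C. -/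
/-!
As `D → 0⁺`, `tanh ((T - T₀) / D)` tends to `-1` for `T < T₀` and to `1` for `T > T₀`, so at
`T₀ ∓ s` the equilibrium equation's left side tends to the ice and water branches
`Q(1 - α_i) - (n T + C)/m - B T` and `Q(1 - α_w) - (n T + C)/m - B T`. By the hypothesis
`A_i < (n T₀ + C)/m < A_w` these have opposite signs at `T₀`, hence at `T₀ ∓ s` for small `s`
by continuity; for small `D` the left side then changes sign on `[T₀ - s, T₀ + s]`, and the
intermediate value theorem gives the equilibrium.
-/

open Filter Topology

namespace Real

theorem tanh_eq_one_sub_two_div (x : ℝ) : tanh x = 1 - 2 / (exp (2 * x) + 1) := by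
  rw [tanh_eq, exp_neg, two_mul, exp_add]
  have : 0 < exp x := exp_pos x
  field_simp
  ring

@[fun_prop]
theorem continuous_tanh : Continuous tanh := by
  simp only [funext tanh_eq_sinh_div_cosh]
  exact continuous_sinh.div continuous_cosh fun x => (cosh_pos x).ne'

theorem tendsto_tanh_atTop : Tendsto tanh atTop (𝓝 1) := by
  have h : Tendsto (fun x => exp (2 * x) + 1) atTop atTop :=
    tendsto_atTop_add_const_right _ _ (tendsto_exp_atTop.comp (tendsto_id.const_mul_atTop two_pos))
  rw [funext tanh_eq_one_sub_two_div]
  simpa using tendsto_const_nhds.sub ((tendsto_const_nhds (x := (2 : ℝ))).div_atTop h)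

theorem tendsto_tanh_div_nhdsGT_zero {a : ℝ} (ha : 0 < a) :
    Tendsto (fun D => tanh (a / D)) (𝓝[>] 0) (𝓝 1) :=
  tendsto_tanh_atTop.comp (tendsto_inv_nhdsGT_zero.const_mul_atTop ha)

end Real

open Real

theorem exists_zero_abs_sub_lt_of_sign_change {f : ℝ → ℝ} (hf : Continuous f) {T₀ s δ : ℝ}
    (hs : 0 ≤ s) (hsδ : s < δ) (h_lo : f (T₀ - s) < 0) (h_hi : 0 < f (T₀ + s)) :
    ∃ T, |T - T₀| < δ ∧ f T = 0 := by
  obtain ⟨T, ⟨hT_lo, hT_hi⟩, hfT⟩ :=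
    intermediate_value_Icc (by linarith) hf.continuousOn ⟨h_lo.le, h_hi.le⟩
  exact ⟨T, abs_lt.mpr ⟨by linarith, by linarith⟩, hfT⟩

theorem exists_zero_add_mul_tanh_div_near {L : ℝ → ℝ} (hL : Continuous L) {c T₀ : ℝ}
    (h_lo : L T₀ - c < 0) (h_hi : 0 < L T₀ + c) :
    ∀ δ > 0, ∃ D₀ > 0, ∀ D, 0 < D → D < D₀ →
      ∃ T, |T - T₀| < δ ∧ L T + c * tanh ((T - T₀) / D) = 0 := by
  intro δ hδ
  have hL_lo : ∀ᶠ s in 𝓝[>] 0, L (T₀ - s) - c < 0 := by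
    refine nhdsWithin_le_nhds (Tendsto.eventually_lt_const h_lo ?_)
    have : Continuous fun s => L (T₀ - s) - c := by fun_prop
    simpa using this.tendsto 0
  have hL_hi : ∀ᶠ s in 𝓝[>] 0, 0 < L (T₀ + s) + c := by
    refine nhdsWithin_le_nhds (Tendsto.eventually_const_lt h_hi ?_)
    have : Continuous fun s => L (T₀ + s) + c := by fun_prop
    simpa using this.tendsto 0
  obtain ⟨s, ⟨hs_lo, hs_hi⟩, hs, hsδ⟩ :=
    ((hL_lo.and hL_hi).and (Ioo_mem_nhdsGT hδ)).exists
  have hF_lo : ∀ᶠ D in 𝓝[>] 0, L (T₀ - s) + c * tanh ((T₀ - s - T₀) / D) < 0 := by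
    refine Tendsto.eventually_lt_const hs_lo ?_
    simp only [sub_sub_cancel_left, neg_div, tanh_neg, mul_neg, ← sub_eq_add_neg]
    simpa using tendsto_const_nhds.sub ((tendsto_tanh_div_nhdsGT_zero hs).const_mul c)
  have hF_hi : ∀ᶠ D in 𝓝[>] 0, 0 < L (T₀ + s) + c * tanh ((T₀ + s - T₀) / D) := by
    refine Tendsto.eventually_const_lt hs_hi ?_
    simp only [add_sub_cancel_left]
    simpa using tendsto_const_nhds.add ((tendsto_tanh_div_nhdsGT_zero hs).const_mul c)
  obtain ⟨D₀, hD₀, hsub⟩ := mem_nhdsGT_iff_exists_Ioo_subset.mp (hF_lo.and hF_hi)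
  refine ⟨D₀, hD₀, fun D hD hDD₀ => ?_⟩
  obtain ⟨hD_lo, hD_hi⟩ := hsub ⟨hD, hDD₀⟩
  exact exists_zero_abs_sub_lt_of_sign_change (by fun_prop) hs.le hsδ hD_lo hD_hi

theorem ebm_equilibrium_near_T0_general
    (Q B m n C T₀ ai aw : ℝ)
    (h_lo : Q * (1 - ai) - B * T₀ < (n * T₀ + C) / m)
    (h_hi : (n * T₀ + C) / m < Q * (1 - aw) - B * T₀) :
    ∀ δ > 0, ∃ D₀ > 0, ∀ D, 0 < D → D < D₀ →
      ∃ T, |T - T₀| < δ ∧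
        Q * (1 - ((ai + aw) / 2 - (ai - aw) / 2 * Real.tanh ((T - T₀) / D)))
          - (n * T + C) / m - B * T = 0 := by
  intro δ hδ
  obtain ⟨D₀, hD₀, h_zero⟩ := exists_zero_add_mul_tanh_div_near
    (L := fun T => Q * (1 - (ai + aw) / 2) - (n * T + C) / m - B * T)
    (c := Q * (ai - aw) / 2) (T₀ := T₀) (by fun_prop) (by linarith) (by linarith) δ hδ
  refine ⟨D₀, hD₀, fun D hD hDD₀ => ?_⟩
  obtain ⟨T, hT, hT_zero⟩ := h_zero D hD hDD₀
  exact ⟨T, hT, by rw [← hT_zero]; ring⟩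

/-- Energy balance model: with `αD(T) = (αi + αw)/2 − ((αi − αw)/2)·tanh((T − T₀)/D)`,
`A_i = Q(1 − αi) − B·T₀`, `A_w = Q(1 − αw) − B·T₀`, and assuming
`A_i < (n·T₀ + C)/m < A_w`, for every `δ > 0` there is `D₀ > 0` such that for all
`0 < D < D₀` there is `T` with `|T − T₀| < δ` and
`Q(1 − αD(T)) − (n·T + C)/m − B·T = 0`; i.e. `(T, (n·T + C)/m)` is an equilibrium
of `Ṫ = Q(1 − αD(T)) − (A + B·T)`, `Ȧ = −m·A + n·T + C`. -/
theorem ebm_equilibrium_near_T0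
    (Q B m n C T₀ ai aw : ℝ)
    (hQ : 0 < Q) (hB : 0 < B) (hm : 0 < m) (hn : 0 ≤ n) (ha : aw < ai)
    (h_lo : Q * (1 - ai) - B * T₀ < (n * T₀ + C) / m)
    (h_hi : (n * T₀ + C) / m < Q * (1 - aw) - B * T₀) :
    ∀ δ > 0, ∃ D₀ > 0, ∀ D, 0 < D → D < D₀ →
      ∃ T, |T - T₀| < δ ∧
        Q * (1 - ((ai + aw) / 2 - (ai - aw) / 2 * Real.tanh ((T - T₀) / D)))
          - (n * T + C) / m - B * T = 0 :=
  ebm_equilibrium_near_T0_general Q B m n C T₀ ai aw h_lo h_hi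
end

section
/- Let Q, B, m > 0, n ≥ 0, C, T₀ ∈ ℝ, and α_i > α_w. For D > 0 define α_D(T) = (α_i + α_w)/2 − ((α_i − α_w)/2)·tanh((T − T₀)/D), and set A_i = Q(1 − α_i) − B·T₀ and A_w = Q(1 − α_w) − B·T₀. Assume A_i < (n·T₀ + C)/m < A_w. Then there exist δ > 0 and D₀ > 0 such that for every D with 0 < D < D₀ and every T with |T − T₀| < δ satisfying the equilibrium condition Q(1 − α_D(T)) − (n·T + C)/m − B·T = 0, one has m·(Q·α_D'(T) + B) + n < 0; that is, the Jacobian [[−Q·α_D'(T) − B, −1], [n, −m]] of the energy balance system at this equilibrium has negative determinant, so the equilibrium is a saddle for all sufficiently small D. -/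
/-!
At an equilibrium, `t = tanh ((T - T₀) / D)` satisfies the affine relation
`K * t = g + (n / m + B) * (T - T₀)` with `K = Q (αᵢ - α_w) / 2` and
`g = (n T₀ + C) / m + B T₀ - Q (1 - (αᵢ + α_w) / 2)`, and the hypotheses say exactly `|g| < K`.
So for `T` near `T₀` the value `t` stays away from `±1` uniformly in `D`, i.e. `1 - t² > ε`,
and the determinant `m B + n - m K (1 - t²) / D` is negative as soon as `D` is small.
-/

open Filter Topology

theorem Real.hasDerivAt_tanh (x : ℝ) : HasDerivAt Real.tanh (1 - Real.tanh x ^ 2) x := by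
  have hcosh : Real.cosh x ≠ 0 := (Real.cosh_pos x).ne'
  have h := (Real.hasDerivAt_sinh x).div (Real.hasDerivAt_cosh x) hcosh
  rw [show Real.sinh / Real.cosh = Real.tanh from funext fun y => (Real.tanh_eq_sinh_div_cosh y).symm]
    at h
  refine h.congr_deriv ?_
  rw [Real.tanh_eq_sinh_div_cosh]
  field_simp

theorem hasDerivAt_const_sub_mul_tanh_div (a b T₀ D T : ℝ) :
    HasDerivAt (fun S => a - b * Real.tanh ((S - T₀) / D))
      (-(b * (1 - Real.tanh ((T - T₀) / D) ^ 2) / D)) T := by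
  have hlin : HasDerivAt (fun S => (S - T₀) / D) (1 / D) T := by
    simpa using ((hasDerivAt_id T).sub_const T₀).div_const D
  refine ((((Real.hasDerivAt_tanh _).comp T hlin).const_mul b).const_sub a).congr_deriv ?_
  ring

theorem exists_lt_one_sub_sq_of_mul_eq_affine {K g L T₀ : ℝ} (hg : |g| < K) :
    ∃ ε > 0, ∃ δ > 0, ∀ T t, |T - T₀| < δ → K * t = g + L * (T - T₀) → ε < 1 - t ^ 2 := by
  have hK : 0 < K := (abs_nonneg g).trans_lt hg
  set r := (K + |g|) / 2 with hr_def
  have hgr : |g| < r := by linarith [hr_def]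
  have hrK : r / K < 1 := (div_lt_one hK).2 (by linarith [hr_def])
  have hr : 0 < r / K := div_pos ((abs_nonneg g).trans_lt hgr) hK
  have hnear : ∀ᶠ T in 𝓝 T₀, |g + L * (T - T₀)| < r := by
    have hcont : Continuous fun T => |g + L * (T - T₀)| := by fun_prop
    exact hcont.tendsto T₀ |>.eventually (gt_mem_nhds (by simpa using hgr))
  obtain ⟨δ, hδ, hδT⟩ := Metric.eventually_nhds_iff.1 hnear
  refine ⟨1 - (r / K) ^ 2, by nlinarith, δ, hδ, fun T t hT heq => ?_⟩
  have ht : |t| < r / K := by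
    rw [lt_div_iff₀ hK, mul_comm, ← abs_of_pos hK, ← abs_mul, heq]
    exact hδT hT
  have : t ^ 2 < (r / K) ^ 2 := sq_lt_sq.2 (by rwa [abs_of_pos hr])
  linarith

theorem exists_sub_div_neg_of_lt {M P ε : ℝ} (hP : 0 < P) (hε : 0 < ε) :
    ∃ D₀ > 0, ∀ D, 0 < D → D < D₀ → ∀ s, ε < s → M - P * s / D < 0 := by
  have hnear : ∀ᶠ D in 𝓝 (0 : ℝ), D * M < P * ε := by
    have hcont : Continuous fun D : ℝ => D * M := by fun_prop
    exact hcont.tendsto 0 |>.eventually (gt_mem_nhds (by simpa using mul_pos hP hε))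
  obtain ⟨D₀, hD₀, hD₀D⟩ := Metric.eventually_nhds_iff.1 hnear
  refine ⟨D₀, hD₀, fun D hD hDD₀ s hs => ?_⟩
  have hDM : D * M < P * ε := hD₀D (by rwa [Real.dist_0_eq_abs, abs_of_pos hD])
  have : M < P * s / D := by
    rw [lt_div_iff₀ hD, mul_comm]
    nlinarith
  linarith

theorem ebm_equilibrium_is_saddle_general
    (Q B m n C T₀ ai aw : ℝ)
    (hm : 0 < m)
    (h_lo : Q * (1 - ai) - B * T₀ < (n * T₀ + C) / m)
    (h_hi : (n * T₀ + C) / m < Q * (1 - aw) - B * T₀) :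
    ∃ δ > 0, ∃ D₀ > 0, ∀ D, 0 < D → D < D₀ →
      ∀ T, |T - T₀| < δ →
        Q * (1 - ((ai + aw) / 2 - (ai - aw) / 2 * Real.tanh ((T - T₀) / D)))
            - (n * T + C) / m - B * T = 0 →
        m * (Q * deriv
              (fun S : ℝ => (ai + aw) / 2 - (ai - aw) / 2 * Real.tanh ((S - T₀) / D))
              T + B) + n < 0 := by
  set K := Q * (ai - aw) / 2 with hK
  set g := (n * T₀ + C) / m + B * T₀ - Q * (1 - (ai + aw) / 2) with hg
  have hgK : |g| < K := abs_lt.2 ⟨by linarith, by linarith⟩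
  obtain ⟨ε, hε, δ, hδ, hbound⟩ :=
    exists_lt_one_sub_sq_of_mul_eq_affine (L := n / m + B) (T₀ := T₀) hgK
  obtain ⟨D₀, hD₀, hsmall⟩ := exists_sub_div_neg_of_lt (M := m * B + n)
    (mul_pos hm ((abs_nonneg g).trans_lt hgK)) hε
  refine ⟨δ, hδ, D₀, hD₀, fun D hD hDD₀ T hT heq => ?_⟩
  set t := Real.tanh ((T - T₀) / D)
  have ht : ε < 1 - t ^ 2 := hbound T t hT (by linear_combination heq)
  rw [(hasDerivAt_const_sub_mul_tanh_div _ _ T₀ D T).deriv]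
  convert hsmall D hD hDD₀ _ ht using 1
  ring

/-- Energy balance model: with `αD(T) = (αi + αw)/2 − ((αi − αw)/2)·tanh((T − T₀)/D)`
and assuming `Q(1 − αi) − B·T₀ < (n·T₀ + C)/m < Q(1 − αw) − B·T₀`, there are `δ > 0`
and `D₀ > 0` such that for every `0 < D < D₀` and every `T` with `|T − T₀| < δ`
satisfying the equilibrium condition `Q(1 − αD(T)) − (n·T + C)/m − B·T = 0`, one has
`m·(Q·αD'(T) + B) + n < 0`: the Jacobian `[[−Q·αD'(T) − B, −1], [n, −m]]` of the
energy balance system at this equilibrium has negative determinant, so the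
equilibrium is a saddle for all sufficiently small `D`. -/
theorem ebm_equilibrium_is_saddle
    (Q B m n C T₀ ai aw : ℝ)
    (hQ : 0 < Q) (hB : 0 < B) (hm : 0 < m) (hn : 0 ≤ n) (ha : aw < ai)
    (h_lo : Q * (1 - ai) - B * T₀ < (n * T₀ + C) / m)
    (h_hi : (n * T₀ + C) / m < Q * (1 - aw) - B * T₀) :
    ∃ δ > 0, ∃ D₀ > 0, ∀ D, 0 < D → D < D₀ →
      ∀ T, |T - T₀| < δ →
        Q * (1 - ((ai + aw) / 2 - (ai - aw) / 2 * Real.tanh ((T - T₀) / D)))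
            - (n * T + C) / m - B * T = 0 →
        m * (Q * deriv
              (fun S : ℝ => (ai + aw) / 2 - (ai - aw) / 2 * Real.tanh ((S - T₀) / D))
              T + B) + n < 0 :=
  ebm_equilibrium_is_saddle_general Q B m n C T₀ ai aw hm h_lo h_hi
end
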